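/- arXiv:2504.04748 — 2 statements merged into one kernel-verified Lean document; each statement's English description precedes it below -/
import Mathlib

section
/- Let A be a finite nonempty set of real numbers that admits a partition A = A₁ ⊔ A₂ into two nonempty subsets such that every gap between consecutive elements within the same subset is strictly smaller than the minimum distance between an element of A₁ and an element of A₂. Then this partition is unique, and moreover all elements of one part are strictly larger than all elements of the other part. -/
/-- `x` and `y` are consecutive elements of the finite set `B ⊆ ℝ`. -/
def ConsecutiveIn (B : Finset ℝ) (x y : ℝ) : Prop :=
  x ∈ B ∧ y ∈ B ∧ x < y ∧ ∀ z ∈ B, ¬(x < z ∧ z < y)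

/-- `(A₁, A₂)` is a 2-clustering partition of `A`: both parts are nonempty, they
partition `A`, and every gap between consecutive elements within the same part is
strictly smaller than the minimum distance between elements of different parts. -/
def IsTwoClustering (A A₁ A₂ : Finset ℝ) : Prop :=
  A₁.Nonempty ∧ A₂.Nonempty ∧ Disjoint A₁ A₂ ∧ A₁ ∪ A₂ = A ∧
  ∀ B ∈ ({A₁, A₂} : Set (Finset ℝ)), ∀ x y : ℝ, ConsecutiveIn B x y →
    ∀ a ∈ A₁, ∀ b ∈ A₂, y - x < |a - b|

lemma IsTwoClustering.symm {A A₁ A₂ : Finset ℝ} (h : IsTwoClustering A A₁ A₂) :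
    IsTwoClustering A A₂ A₁ := by
  obtain ⟨h1, h2, hd, hu, hc⟩ := h
  refine ⟨h2, h1, hd.symm, by rw [Finset.union_comm]; exact hu, ?_⟩
  intro B hB x y hxy a ha b hb
  have hB' : B ∈ ({A₁, A₂} : Set (Finset ℝ)) := by
    simp only [Set.mem_insert_iff, Set.mem_singleton_iff] at hB ⊢
    tauto
  have := hc B hB' x y hxy b hb a ha
  rwa [abs_sub_comm] at this

lemma between_false {A A₁ A₂ : Finset ℝ} (h : IsTwoClustering A A₁ A₂)
    {a a' b : ℝ} (ha : a ∈ A₁) (ha' : a' ∈ A₁) (hb : b ∈ A₂)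
    (h1 : a < b) (h2 : b < a') : False := by
  obtain ⟨hn1, hn2, hd, hu, hc⟩ := h
  set S := A₁.filter (fun z => z < b) with hS
  set T := A₁.filter (fun z => b < z) with hT
  have hSne : S.Nonempty := ⟨a, Finset.mem_filter.mpr ⟨ha, h1⟩⟩
  have hTne : T.Nonempty := ⟨a', Finset.mem_filter.mpr ⟨ha', h2⟩⟩
  set x := S.max' hSne with hx
  set y := T.min' hTne with hy
  have hxS := S.max'_mem hSne
  have hyT := T.min'_mem hTne
  have hxA₁ : x ∈ A₁ := (Finset.mem_filter.mp hxS).1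
  have hxb : x < b := (Finset.mem_filter.mp hxS).2
  have hyA₁ : y ∈ A₁ := (Finset.mem_filter.mp hyT).1
  have hby : b < y := (Finset.mem_filter.mp hyT).2
  have hcons : ConsecutiveIn A₁ x y := by
    refine ⟨hxA₁, hyA₁, hxb.trans hby, ?_⟩
    rintro z hz ⟨hz1, hz2⟩
    have hzb : z ≠ b := fun e => Finset.disjoint_left.mp hd hz (e ▸ hb)
    rcases hzb.lt_or_gt with hlt | hgt
    · have : z ≤ x := S.le_max' z (Finset.mem_filter.mpr ⟨hz, hlt⟩)
      linarith
    · have : y ≤ z := T.min'_le z (Finset.mem_filter.mpr ⟨hz, hgt⟩)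
      linarith
  have := hc A₁ (by simp) x y hcons x hxA₁ b hb
  rw [abs_sub_comm, abs_of_pos (by linarith)] at this
  linarith

lemma sep {A A₁ A₂ : Finset ℝ} (h : IsTwoClustering A A₁ A₂) :
    (∀ a ∈ A₁, ∀ b ∈ A₂, a < b) ∨ (∀ a ∈ A₁, ∀ b ∈ A₂, b < a) := by
  by_contra hcon
  push_neg at hcon
  obtain ⟨⟨x, hx, y, hy, hyx⟩, ⟨x', hx', y', hy', hxy'⟩⟩ := hcon
  have hd := h.2.2.1
  have hyx' : y < x := lt_of_le_of_ne hyx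
    (fun e => Finset.disjoint_left.mp hd hx (e ▸ hy))
  have hxy'' : x' < y' := lt_of_le_of_ne hxy'
    (fun e => Finset.disjoint_left.mp hd hx' (e ▸ hy'))
  rcases lt_or_ge x' y with hlt | hle
  · exact between_false h hx' hx hy hlt hyx'
  · have : y < x' := lt_of_le_of_ne hle
      (fun e => Finset.disjoint_left.mp hd hx' (e ▸ hy))
    exact between_false h.symm hy hy' hx' this hxy''

lemma unique_aux {A A₁ A₂ B₁ B₂ : Finset ℝ}
    (hA : IsTwoClustering A A₁ A₂) (hB : IsTwoClustering A B₁ B₂)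
    (sA : ∀ a ∈ A₁, ∀ b ∈ A₂, a < b) (sB : ∀ a ∈ B₁, ∀ b ∈ B₂, a < b)
    (hlt : A₁.max' hA.1 < B₁.max' hB.1) : False := by
  obtain ⟨hn1, hn2, hd, hu, hc⟩ := hA
  obtain ⟨hn1', hn2', hd', hu', hc'⟩ := hB
  set c := A₁.max' hn1 with hcdef
  set m := A₂.min' hn2 with hmdef
  set c' := B₁.max' hn1' with hc'def
  set m' := B₂.min' hn2' with hm'def
  have memA : ∀ z, z ∈ A ↔ z ∈ A₁ ∨ z ∈ A₂ := fun z => by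
    rw [← hu, Finset.mem_union]
  have memB : ∀ z, z ∈ A ↔ z ∈ B₁ ∨ z ∈ B₂ := fun z => by
    rw [← hu', Finset.mem_union]
  have hcA₁ : c ∈ A₁ := A₁.max'_mem hn1
  have hmA₂ : m ∈ A₂ := A₂.min'_mem hn2
  have hc'B₁ : c' ∈ B₁ := B₁.max'_mem hn1'
  have hm'B₂ : m' ∈ B₂ := B₂.min'_mem hn2'
  have hcm : c < m := sA c hcA₁ m hmA₂
  have hc'm' : c' < m' := sB c' hc'B₁ m' hm'B₂
  -- c' ∈ A₂
  have hc'A₂ : c' ∈ A₂ := by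
    rcases (memA c').mp ((memB c').mpr (Or.inl hc'B₁)) with h | h
    · exact absurd (A₁.le_max' c' h) (not_le.mpr hlt)
    · exact h
  have hmc' : m ≤ c' := A₂.min'_le c' hc'A₂
  have hmB₁ : m ∈ B₁ := by
    rcases (memB m).mp ((memA m).mpr (Or.inr hmA₂)) with h | h
    · exact h
    · exact absurd (sB c' hc'B₁ m h) (not_lt.mpr hmc')
  have hcB₁ : c ∈ B₁ := by
    rcases (memB c).mp ((memA c).mpr (Or.inl hcA₁)) with h | h
    · exact h
    · exact absurd (sB c' hc'B₁ c h) (not_lt.mpr hlt.le)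
  have hcons1 : ConsecutiveIn B₁ c m := by
    refine ⟨hcB₁, hmB₁, hcm, ?_⟩
    rintro z hz ⟨hz1, hz2⟩
    rcases (memA z).mp ((memB z).mpr (Or.inl hz)) with h | h
    · exact absurd (A₁.le_max' z h) (not_le.mpr hz1)
    · exact absurd (A₂.min'_le z h) (not_le.mpr hz2)
  have key1 : m - c < m' - c' := by
    have := hc' B₁ (by simp) c m hcons1 c' hc'B₁ m' hm'B₂
    rwa [abs_sub_comm, abs_of_pos (by linarith)] at this
  have hm'A₂ : m' ∈ A₂ := by
    rcases (memA m').mp ((memB m').mpr (Or.inr hm'B₂)) with h | h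
    · exact absurd (A₁.le_max' m' h) (not_le.mpr (by linarith))
    · exact h
  have hcons2 : ConsecutiveIn A₂ c' m' := by
    refine ⟨hc'A₂, hm'A₂, hc'm', ?_⟩
    rintro z hz ⟨hz1, hz2⟩
    rcases (memB z).mp ((memA z).mpr (Or.inr hz)) with h | h
    · exact absurd (B₁.le_max' z h) (not_le.mpr hz1)
    · exact absurd (B₂.min'_le z h) (not_le.mpr hz2)
  have key2 : m' - c' < m - c := by
    have := hc A₂ (by simp) c' m' hcons2 c hcA₁ m hmA₂
    rwa [abs_sub_comm, abs_of_pos (by linarith)] at this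
  linarith

lemma unique_lemma {A A₁ A₂ B₁ B₂ : Finset ℝ}
    (hA : IsTwoClustering A A₁ A₂) (hB : IsTwoClustering A B₁ B₂)
    (sA : ∀ a ∈ A₁, ∀ b ∈ A₂, a < b) (sB : ∀ a ∈ B₁, ∀ b ∈ B₂, a < b) :
    B₁ = A₁ ∧ B₂ = A₂ := by
  have hc : A₁.max' hA.1 = B₁.max' hB.1 := by
    rcases lt_trichotomy (A₁.max' hA.1) (B₁.max' hB.1) with h | h | h
    · exact absurd h (fun h => unique_aux hA hB sA sB h)
    · exact h
    · exact absurd h (fun h => unique_aux hB hA sB sA h)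
  set c := A₁.max' hA.1 with hcdef
  have memA : ∀ z, z ∈ A ↔ z ∈ A₁ ∨ z ∈ A₂ := fun z => by
    rw [← hA.2.2.2.1, Finset.mem_union]
  have memB : ∀ z, z ∈ A ↔ z ∈ B₁ ∨ z ∈ B₂ := fun z => by
    rw [← hB.2.2.2.1, Finset.mem_union]
  have h1 : B₁ = A₁ := by
    ext z
    constructor
    · intro hz
      have hzc : z ≤ c := hc ▸ B₁.le_max' z hz
      rcases (memA z).mp ((memB z).mpr (Or.inl hz)) with h | h
      · exact h
      · exact absurd (sA c (A₁.max'_mem hA.1) z h) (not_lt.mpr hzc)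
    · intro hz
      have hzc : z ≤ c := A₁.le_max' z hz
      rcases (memB z).mp ((memA z).mpr (Or.inl hz)) with h | h
      · exact h
      · have := sB (B₁.max' hB.1) (B₁.max'_mem hB.1) z h
        rw [← hc] at this
        exact absurd this (not_lt.mpr hzc)
  have h2 : B₂ = A₂ := by
    ext z
    constructor
    · intro hz
      rcases (memA z).mp ((memB z).mpr (Or.inr hz)) with h | h
      · exact absurd (h1 ▸ h : z ∈ B₁)
          (Finset.disjoint_right.mp hB.2.2.1 hz)
      · exact h
    · intro hz
      rcases (memB z).mp ((memA z).mpr (Or.inr hz)) with h | h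
      · exact absurd (h1 ▸ h : z ∈ A₁)
          (Finset.disjoint_right.mp hA.2.2.1 hz)
      · exact h
  exact ⟨h1, h2⟩

/-- The 2-clustering partition of a finite set of reals is unique (up to swapping
the two parts), and moreover all elements of one part are strictly larger than all
elements of the other part. -/
theorem twoClustering_unique_and_separated
    (A A₁ A₂ B₁ B₂ : Finset ℝ)
    (hA : IsTwoClustering A A₁ A₂) (hB : IsTwoClustering A B₁ B₂) :
    ((B₁ = A₁ ∧ B₂ = A₂) ∨ (B₁ = A₂ ∧ B₂ = A₁)) ∧
    ((∀ a ∈ A₁, ∀ b ∈ A₂, a < b) ∨ (∀ a ∈ A₁, ∀ b ∈ A₂, b < a)) := by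
  rcases sep hA with sA | sA <;> rcases sep hB with sB | sB
  · exact ⟨Or.inl (unique_lemma hA hB sA sB), Or.inl sA⟩
  · have sB' : ∀ a ∈ B₂, ∀ b ∈ B₁, a < b := fun a ha b hb => sB b hb a ha
    obtain ⟨e1, e2⟩ := unique_lemma hA hB.symm sA sB'
    exact ⟨Or.inr ⟨e2, e1⟩, Or.inl sA⟩
  · have sA' : ∀ a ∈ A₂, ∀ b ∈ A₁, a < b := fun a ha b hb => sA b hb a ha
    obtain ⟨e1, e2⟩ := unique_lemma hA.symm hB sA' sB
    exact ⟨Or.inr ⟨e1, e2⟩, Or.inr sA⟩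
  · have sA' : ∀ a ∈ A₂, ∀ b ∈ A₁, a < b := fun a ha b hb => sA b hb a ha
    have sB' : ∀ a ∈ B₂, ∀ b ∈ B₁, a < b := fun a ha b hb => sB b hb a ha
    obtain ⟨e1, e2⟩ := unique_lemma hA.symm hB.symm sA' sB'
    exact ⟨Or.inl ⟨e2, e1⟩, Or.inr sA⟩
end

section
/- Define the sequence δ_t for a finite directed graph G by δ_t = max over pairs (u,v), (u',v') with u ≠ v and u' ≠ v' of |p_{u,v}^{(t)} − p_{u',v'}^{(t)}|, where p_{u,v}^{(t)} is the probability that two independent random walks on G started at u and v meet within t steps (with p_{u,u}^{(t)} = 1). Then δ_t ≤ t·δ_1 for all t ≥ 1. -/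
/-- For a directed graph on `[n]` with all out-degrees positive, let `q t u v` be the
probability that two independent random walks started at `u` and `v` meet within `t`
steps (with `q t u u = 1`); it satisfies `q 0 u v = 0` for `u ≠ v` and the recursion
`q (t+1) u v = (1/(dᵤ d_v)) ∑_{a ∈ N_u} ∑_{b ∈ N_v} q t a b` for `u ≠ v`. If `δ₁` is the
maximum of `|q 1 a b − q 1 a' b'|` over pairs with `a ≠ b`, `a' ≠ b'`, then
`δ_t ≤ t · δ₁`: for every `t ≥ 1` and all `u ≠ v`, `u' ≠ v'`,
`|q t u v − q t u' v'| ≤ t · δ₁`. -/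
theorem meeting_probability_increment_bound
    (n : ℕ) (N : Fin n → Finset (Fin n)) (hN : ∀ v, (N v).Nonempty)
    (q : ℕ → Fin n → Fin n → ℝ)
    (hq_diag : ∀ t u, q t u u = 1)
    (hq0 : ∀ u v, u ≠ v → q 0 u v = 0)
    (hqrec : ∀ t u v, u ≠ v →
      q (t + 1) u v
        = (((N u).card : ℝ) * ((N v).card : ℝ))⁻¹ * ∑ a ∈ N u, ∑ b ∈ N v, q t a b)
    (δ₁ : ℝ)
    (hδ₁ : IsGreatest {x : ℝ | ∃ a b a' b' : Fin n,
      a ≠ b ∧ a' ≠ b' ∧ x = |q 1 a b - q 1 a' b'|} δ₁) :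
    ∀ t : ℕ, 1 ≤ t → ∀ u v u' v' : Fin n, u ≠ v → u' ≠ v' →
      |q t u v - q t u' v'| ≤ t * δ₁ := by
  obtain ⟨hmem, hub⟩ := hδ₁
  have hδle : ∀ a b a' b' : Fin n, a ≠ b → a' ≠ b' → q 1 a b - q 1 a' b' ≤ δ₁ := by
    intro a b a' b' h h'
    calc q 1 a b - q 1 a' b' ≤ |q 1 a b - q 1 a' b'| := le_abs_self _
      _ ≤ δ₁ := hub ⟨a, b, a', b', h, h', rfl⟩
  have hcard : ∀ w : Fin n, (0:ℝ) < ((N w).card : ℝ) := fun w => by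
    exact_mod_cast Finset.card_pos.mpr (hN w)
  have hq01 : ∀ t a b, 0 ≤ q t a b ∧ q t a b ≤ 1 := by
    intro t
    induction t with
    | zero =>
      intro a b
      by_cases h : a = b
      · subst h; simp [hq_diag]
      · simp [hq0 a b h]
    | succ t ih =>
      intro a b
      by_cases h : a = b
      · subst h; simp [hq_diag]
      · rw [hqrec t a b h]
        have hc : (0:ℝ) < ((N a).card : ℝ) * ((N b).card : ℝ) :=
          mul_pos (hcard a) (hcard b)
        constructor
        · apply mul_nonneg (le_of_lt (inv_pos.mpr hc))
          exact Finset.sum_nonneg fun i _ => Finset.sum_nonneg fun j _ => (ih i j).1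
        · rw [inv_mul_le_iff₀ hc, mul_one]
          calc ∑ i ∈ N a, ∑ j ∈ N b, q t i j
              ≤ ∑ i ∈ N a, ∑ j ∈ N b, (1:ℝ) :=
                Finset.sum_le_sum fun i _ => Finset.sum_le_sum fun j _ => (ih i j).2
            _ = ((N a).card : ℝ) * ((N b).card : ℝ) := by
                simp [Finset.sum_const, mul_comm]
  have key_up : ∀ (t : ℕ) (M : ℝ), 0 ≤ M → (∀ x y, x ≠ y → q t x y ≤ M) →
      ∀ u v, u ≠ v → q (t+1) u v ≤ q 1 u v + (1 - q 1 u v) * M := by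
    intro t M hM0 hM u v huv
    have hc : (0:ℝ) < ((N u).card : ℝ) * ((N v).card : ℝ) := mul_pos (hcard u) (hcard v)
    have hterm : ∀ x y, q t x y ≤ (1 - M) * q 0 x y + M := by
      intro x y
      by_cases h : x = y
      · subst h; rw [hq_diag, hq_diag]; ring_nf; rfl
      · rw [hq0 x y h]; simpa using hM x y h
    have hsum : ∑ a ∈ N u, ∑ b ∈ N v, q t a b
        ≤ (1 - M) * (∑ a ∈ N u, ∑ b ∈ N v, q 0 a b)
          + ((N u).card : ℝ) * ((N v).card : ℝ) * M := by
      calc ∑ a ∈ N u, ∑ b ∈ N v, q t a b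
          ≤ ∑ a ∈ N u, ∑ b ∈ N v, ((1 - M) * q 0 a b + M) :=
            Finset.sum_le_sum fun a _ => Finset.sum_le_sum fun b _ => hterm a b
        _ = (1 - M) * (∑ a ∈ N u, ∑ b ∈ N v, q 0 a b)
            + ((N u).card : ℝ) * ((N v).card : ℝ) * M := by
            simp only [Finset.sum_add_distrib, ← Finset.mul_sum, Finset.sum_const,
              nsmul_eq_mul]
            ring
    rw [hqrec t u v huv, hqrec 0 u v huv]
    have hc' : ((N u).card : ℝ) * ((N v).card : ℝ) ≠ 0 := ne_of_gt hc
    have h1 : (((N u).card : ℝ) * ((N v).card : ℝ))⁻¹ * (∑ a ∈ N u, ∑ b ∈ N v, q t a b)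
        ≤ (((N u).card : ℝ) * ((N v).card : ℝ))⁻¹ *
          ((1 - M) * (∑ a ∈ N u, ∑ b ∈ N v, q 0 a b)
            + ((N u).card : ℝ) * ((N v).card : ℝ) * M) :=
      mul_le_mul_of_nonneg_left hsum (le_of_lt (inv_pos.mpr hc))
    refine h1.trans (le_of_eq ?_)
    field_simp
    ring
  have key_down : ∀ (t : ℕ) (m : ℝ), m ≤ 1 → (∀ x y, x ≠ y → m ≤ q t x y) →
      ∀ u v, u ≠ v → q 1 u v + (1 - q 1 u v) * m ≤ q (t+1) u v := by
    intro t m hm1 hm u v huv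
    have hc : (0:ℝ) < ((N u).card : ℝ) * ((N v).card : ℝ) := mul_pos (hcard u) (hcard v)
    have hterm : ∀ x y, (1 - m) * q 0 x y + m ≤ q t x y := by
      intro x y
      by_cases h : x = y
      · subst h; rw [hq_diag, hq_diag]; ring_nf; rfl
      · rw [hq0 x y h]; simpa using hm x y h
    have hsum : (1 - m) * (∑ a ∈ N u, ∑ b ∈ N v, q 0 a b)
          + ((N u).card : ℝ) * ((N v).card : ℝ) * m
        ≤ ∑ a ∈ N u, ∑ b ∈ N v, q t a b := by
      calc (1 - m) * (∑ a ∈ N u, ∑ b ∈ N v, q 0 a b)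
            + ((N u).card : ℝ) * ((N v).card : ℝ) * m
          = ∑ a ∈ N u, ∑ b ∈ N v, ((1 - m) * q 0 a b + m) := by
            simp only [Finset.sum_add_distrib, ← Finset.mul_sum, Finset.sum_const,
              nsmul_eq_mul]
            ring
        _ ≤ ∑ a ∈ N u, ∑ b ∈ N v, q t a b :=
            Finset.sum_le_sum fun a _ => Finset.sum_le_sum fun b _ => hterm a b
    rw [hqrec t u v huv, hqrec 0 u v huv]
    have hc' : ((N u).card : ℝ) * ((N v).card : ℝ) ≠ 0 := ne_of_gt hc
    have h1 : (((N u).card : ℝ) * ((N v).card : ℝ))⁻¹ *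
          ((1 - m) * (∑ a ∈ N u, ∑ b ∈ N v, q 0 a b)
            + ((N u).card : ℝ) * ((N v).card : ℝ) * m)
        ≤ (((N u).card : ℝ) * ((N v).card : ℝ))⁻¹ * (∑ a ∈ N u, ∑ b ∈ N v, q t a b) :=
      mul_le_mul_of_nonneg_left hsum (le_of_lt (inv_pos.mpr hc))
    refine le_trans (le_of_eq ?_) h1
    field_simp
    ring
  have main : ∀ t : ℕ, ∀ a b a' b' : Fin n, a ≠ b → a' ≠ b' →
      q (t+1) a b - q (t+1) a' b' ≤ (t+1 : ℝ) * δ₁ := by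
    intro t
    induction t with
    | zero =>
      intro a b a' b' h h'
      simpa using hδle a b a' b' h h'
    | succ t ih =>
      intro a b a' b' h h'
      have hsne : (Finset.univ.filter (fun p : Fin n × Fin n => p.1 ≠ p.2)).Nonempty :=
        ⟨(a, b), by simp [h]⟩
      set s : Finset (Fin n × Fin n) := Finset.univ.filter (fun p => p.1 ≠ p.2) with hs
      set M := s.sup' hsne (fun p => q (t+1) p.1 p.2) with hMdef
      set m := s.inf' hsne (fun p => q (t+1) p.1 p.2) with hmdef
      have hMle : ∀ x y, x ≠ y → q (t+1) x y ≤ M := fun x y hxy =>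
        Finset.le_sup' (f := fun p : Fin n × Fin n => q (t+1) p.1 p.2)
          (b := (x, y)) (by simp [hs, hxy])
      have hmle : ∀ x y, x ≠ y → m ≤ q (t+1) x y := fun x y hxy =>
        Finset.inf'_le (f := fun p : Fin n × Fin n => q (t+1) p.1 p.2)
          (b := (x, y)) (by simp [hs, hxy])
      have hm0 : 0 ≤ m := Finset.le_inf' hsne _ fun p _ => (hq01 _ _ _).1
      have hM1 : M ≤ 1 := Finset.sup'_le hsne _ fun p _ => (hq01 _ _ _).2
      have hM0 : 0 ≤ M := le_trans (hq01 (t+1) a b).1 (hMle a b h)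
      have hm1 : m ≤ 1 := le_trans (hmle a b h) (hq01 (t+1) a b).2
      have hmM : m ≤ M := le_trans (hmle a b h) (hMle a b h)
      have hMm : M - m ≤ (t+1 : ℝ) * δ₁ := by
        obtain ⟨p, hp, hpM⟩ := Finset.exists_mem_eq_sup' hsne
          (fun p : Fin n × Fin n => q (t+1) p.1 p.2)
        obtain ⟨r, hr, hrm⟩ := Finset.exists_mem_eq_inf' hsne
          (fun p : Fin n × Fin n => q (t+1) p.1 p.2)
        have hp' : p.1 ≠ p.2 := by simpa [hs] using hp
        have hr' : r.1 ≠ r.2 := by simpa [hs] using hr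
        rw [hMdef, hmdef, hpM, hrm]
        exact ih p.1 p.2 r.1 r.2 hp' hr'
      have h1 := key_up (t+1) M hM0 hMle a b h
      have h2 := key_down (t+1) m hm1 hmle a' b' h'
      have h3 : q 1 a b - q 1 a' b' ≤ δ₁ := hδle a b a' b' h h'
      have hA := hq01 1 a b
      have hB := hq01 1 a' b'
      obtain ⟨a0, b0, a0', b0', -, -, he⟩ := hmem
      have hδnn : 0 ≤ δ₁ := he ▸ abs_nonneg _
      push_cast
      nlinarith [mul_le_mul_of_nonneg_right h3 (by linarith : (0:ℝ) ≤ 1 - m),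
        mul_le_mul_of_nonneg_left hmM hA.1, hA.1, hA.2, hB.1, hB.2]
  intro t ht u v u' v' huv hu'v'
  obtain ⟨t, rfl⟩ : ∃ s, t = s + 1 := ⟨t - 1, (Nat.succ_pred_eq_of_pos ht).symm⟩
  rw [abs_sub_le_iff]
  push_cast
  exact ⟨main t u v u' v' huv hu'v', main t u' v' u v hu'v' huv⟩
end
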